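/- Let 𝐚 = a₁e₁ + a₂e₂ + a₃e₃ be a nonzero vector in Cl(0,3) and write ‖𝐚‖ = √(a₁² + a₂² + a₃²). Then for any integers c₁, c₂, exp( (1/2)·log(‖𝐚‖²) + π·(𝐚/‖𝐚‖)·(1/2 + c₁(1 + I) + c₂(1 - I)) ) = 𝐚. -/

import Mathlib

open Real CliffordAlgebra

noncomputable section

/-- The quadratic form of signature (0,3): `Q(x) = -(x₁² + x₂² + x₃²)`. -/
def Q03 : QuadraticForm ℝ (Fin 3 → ℝ) := QuadraticMap.weightedSumSquares ℝ ![-1, -1, -1]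

/-- The real Clifford algebra Cl(0,3). -/
abbrev Cl03 := CliffordAlgebra Q03

/-- The canonical (module) topology on the finite-dimensional real algebra Cl(0,3). -/
instance : TopologicalSpace Cl03 := moduleTopology ℝ Cl03

/-- The orthonormal generators `e₁, e₂, e₃` (indexed here by `0, 1, 2`). -/
def e (i : Fin 3) : Cl03 := ι Q03 (Pi.single i 1)

/-- The pseudoscalar `I = e₁e₂e₃`. -/
def I3 : Cl03 := e 0 * e 1 * e 2

/-- The exponential `exp M = ∑ₖ Mᵏ/k!` in Cl(0,3). -/
def expCl (M : Cl03) : Cl03 := ∑' n : ℕ, (n.factorial : ℝ)⁻¹ • M ^ n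

/-- `atan2 y x` is the argument in `(-π, π]` of the complex number `x + iy`. -/
def atan2 (y x : ℝ) : ℝ := Complex.arg ⟨x, y⟩

lemma Q03_single (i : Fin 3) : Q03 (Pi.single i 1) = -1 := by
  fin_cases i <;>
    simp [Q03, QuadraticMap.weightedSumSquares_apply, Fin.sum_univ_three, Pi.single_apply]

lemma es (i : Fin 3) : e i * e i = -1 := by
  rw [e, ι_sq_scalar, Q03_single]; simp

lemma e_anti {i j : Fin 3} (h : i ≠ j) : e i * e j = -(e j * e i) := by
  rw [e, e, ι_mul_ι_comm]
  have : QuadraticMap.polar Q03 (Pi.single i 1) (Pi.single j 1) = 0 := by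
    fin_cases i <;> fin_cases j <;> first
      | exact absurd rfl h
      | simp [QuadraticMap.polar, Q03, QuadraticMap.weightedSumSquares_apply,
          Fin.sum_univ_three, Pi.single_apply]
  rw [this]; simp

lemma es' (i : Fin 3) (x : Cl03) : e i * (e i * x) = -x := by
  rw [← mul_assoc, es, neg_one_mul]

lemma sw10 : e 1 * e 0 = -(e 0 * e 1) := e_anti (by decide)
lemma sw20 : e 2 * e 0 = -(e 0 * e 2) := e_anti (by decide)
lemma sw21 : e 2 * e 1 = -(e 1 * e 2) := e_anti (by decide)
lemma sw10' (x : Cl03) : e 1 * (e 0 * x) = -(e 0 * (e 1 * x)) := by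
  rw [← mul_assoc, sw10, neg_mul, mul_assoc]
lemma sw20' (x : Cl03) : e 2 * (e 0 * x) = -(e 0 * (e 2 * x)) := by
  rw [← mul_assoc, sw20, neg_mul, mul_assoc]
lemma sw21' (x : Cl03) : e 2 * (e 1 * x) = -(e 1 * (e 2 * x)) := by
  rw [← mul_assoc, sw21, neg_mul, mul_assoc]

example : I3 * I3 = 1 := by
  simp only [I3, mul_assoc, es, es', sw10, sw20, sw21, sw10', sw20', sw21',
    neg_mul, mul_neg, neg_neg, one_mul, mul_one]

lemma e_comm_I3 (i : Fin 3) : e i * I3 = I3 * e i := by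
  match i with
  | 0 | 1 | 2 =>
    simp only [I3, mul_assoc, es, es', sw10, sw20, sw21, sw10', sw20', sw21',
      neg_mul, mul_neg, neg_neg, one_mul, mul_one]

def Sgen : Set Cl03 :=
  {1, e 0, e 1, e 2, e 0 * e 1, e 0 * e 2, e 1 * e 2, e 0 * (e 1 * e 2)}

def S8 : Submodule ℝ Cl03 := Submodule.span ℝ Sgen

lemma mem_S8_of_gen {x : Cl03} (h : x ∈ Sgen) : x ∈ S8 := Submodule.subset_span h

lemma w1 : (1 : Cl03) ∈ S8 := mem_S8_of_gen (Set.mem_insert _ _)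
lemma w2 : e 0 ∈ S8 := mem_S8_of_gen (Set.mem_insert_of_mem _ (Set.mem_insert _ _))
lemma w3 : e 1 ∈ S8 := mem_S8_of_gen (Set.mem_insert_of_mem _ (Set.mem_insert_of_mem _ (Set.mem_insert _ _)))
lemma w4 : e 2 ∈ S8 := mem_S8_of_gen (Set.mem_insert_of_mem _ (Set.mem_insert_of_mem _ (Set.mem_insert_of_mem _ (Set.mem_insert _ _))))
lemma w5 : e 0 * e 1 ∈ S8 := mem_S8_of_gen (Set.mem_insert_of_mem _ (Set.mem_insert_of_mem _ (Set.mem_insert_of_mem _ (Set.mem_insert_of_mem _ (Set.mem_insert _ _)))))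
lemma w6 : e 0 * e 2 ∈ S8 := mem_S8_of_gen (Set.mem_insert_of_mem _ (Set.mem_insert_of_mem _ (Set.mem_insert_of_mem _ (Set.mem_insert_of_mem _ (Set.mem_insert_of_mem _ (Set.mem_insert _ _))))))
lemma w7 : e 1 * e 2 ∈ S8 := mem_S8_of_gen (Set.mem_insert_of_mem _ (Set.mem_insert_of_mem _ (Set.mem_insert_of_mem _ (Set.mem_insert_of_mem _ (Set.mem_insert_of_mem _ (Set.mem_insert_of_mem _ (Set.mem_insert _ _)))))))
lemma w8 : e 0 * (e 1 * e 2) ∈ S8 := mem_S8_of_gen (Set.mem_insert_of_mem _ (Set.mem_insert_of_mem _ (Set.mem_insert_of_mem _ (Set.mem_insert_of_mem _ (Set.mem_insert_of_mem _ (Set.mem_insert_of_mem _ (Set.mem_insert_of_mem _ (rfl))))))))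

lemma lmul_e0_gen {x : Cl03} (hx : x ∈ Sgen) : e 0 * x ∈ S8 := by
  rcases hx with rfl|rfl|rfl|rfl|rfl|rfl|rfl|rfl
  · rw [mul_one]; exact w2
  · simp only [mul_assoc, es, es', sw10, sw20, sw21, sw10', sw20', sw21', neg_mul, mul_neg, neg_neg, one_mul, mul_one]; exact neg_mem w1
  · exact w5
  · exact w6
  · simp only [mul_assoc, es, es', sw10, sw20, sw21, sw10', sw20', sw21', neg_mul, mul_neg, neg_neg, one_mul, mul_one]; exact neg_mem w3
  · simp only [mul_assoc, es, es', sw10, sw20, sw21, sw10', sw20', sw21', neg_mul, mul_neg, neg_neg, one_mul, mul_one]; exact neg_mem w4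
  · exact w8
  · simp only [mul_assoc, es, es', sw10, sw20, sw21, sw10', sw20', sw21', neg_mul, mul_neg, neg_neg, one_mul, mul_one]; exact neg_mem w7

lemma lmul_e1_gen {x : Cl03} (hx : x ∈ Sgen) : e 1 * x ∈ S8 := by
  rcases hx with rfl|rfl|rfl|rfl|rfl|rfl|rfl|rfl
  · rw [mul_one]; exact w3
  · simp only [mul_assoc, es, es', sw10, sw20, sw21, sw10', sw20', sw21', neg_mul, mul_neg, neg_neg, one_mul, mul_one]; exact neg_mem w5
  · simp only [mul_assoc, es, es', sw10, sw20, sw21, sw10', sw20', sw21', neg_mul, mul_neg, neg_neg, one_mul, mul_one]; exact neg_mem w1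
  · exact w7
  · simp only [mul_assoc, es, es', sw10, sw20, sw21, sw10', sw20', sw21', neg_mul, mul_neg, neg_neg, one_mul, mul_one]; exact w2
  · simp only [mul_assoc, es, es', sw10, sw20, sw21, sw10', sw20', sw21', neg_mul, mul_neg, neg_neg, one_mul, mul_one]; exact neg_mem w8
  · simp only [mul_assoc, es, es', sw10, sw20, sw21, sw10', sw20', sw21', neg_mul, mul_neg, neg_neg, one_mul, mul_one]; exact neg_mem w4
  · simp only [mul_assoc, es, es', sw10, sw20, sw21, sw10', sw20', sw21', neg_mul, mul_neg, neg_neg, one_mul, mul_one]; exact w6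

lemma lmul_e2_gen {x : Cl03} (hx : x ∈ Sgen) : e 2 * x ∈ S8 := by
  rcases hx with rfl|rfl|rfl|rfl|rfl|rfl|rfl|rfl
  · rw [mul_one]; exact w4
  · simp only [mul_assoc, es, es', sw10, sw20, sw21, sw10', sw20', sw21', neg_mul, mul_neg, neg_neg, one_mul, mul_one]; exact neg_mem w6
  · simp only [mul_assoc, es, es', sw10, sw20, sw21, sw10', sw20', sw21', neg_mul, mul_neg, neg_neg, one_mul, mul_one]; exact neg_mem w7
  · simp only [mul_assoc, es, es', sw10, sw20, sw21, sw10', sw20', sw21', neg_mul, mul_neg, neg_neg, one_mul, mul_one]; exact neg_mem w1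
  · simp only [mul_assoc, es, es', sw10, sw20, sw21, sw10', sw20', sw21', neg_mul, mul_neg, neg_neg, one_mul, mul_one]; exact w8
  · simp only [mul_assoc, es, es', sw10, sw20, sw21, sw10', sw20', sw21', neg_mul, mul_neg, neg_neg, one_mul, mul_one]; exact w2
  · simp only [mul_assoc, es, es', sw10, sw20, sw21, sw10', sw20', sw21', neg_mul, mul_neg, neg_neg, one_mul, mul_one]; exact w3
  · simp only [mul_assoc, es, es', sw10, sw20, sw21, sw10', sw20', sw21', neg_mul, mul_neg, neg_neg, one_mul, mul_one]; exact neg_mem w5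

lemma lmul_e_mem (i : Fin 3) {b : Cl03} (hb : b ∈ S8) : e i * b ∈ S8 := by
  induction hb using Submodule.span_induction with
  | mem x hx =>
    match i with
    | 0 => exact lmul_e0_gen hx
    | 1 => exact lmul_e1_gen hx
    | 2 => exact lmul_e2_gen hx
  | zero => simp
  | add x y _ _ hx hy => rw [mul_add]; exact add_mem hx hy
  | smul c x _ hx => rw [mul_smul_comm]; exact Submodule.smul_mem _ _ hx

lemma mul_mem_S8 {a b : Cl03} (ha : a ∈ S8) (hb : b ∈ S8) : a * b ∈ S8 := by
  induction ha using Submodule.span_induction with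
  | mem x hx =>
    rcases hx with rfl|rfl|rfl|rfl|rfl|rfl|rfl|rfl
    · simpa using hb
    · exact lmul_e_mem _ hb
    · exact lmul_e_mem _ hb
    · exact lmul_e_mem _ hb
    · rw [mul_assoc]; exact lmul_e_mem _ (lmul_e_mem _ hb)
    · rw [mul_assoc]; exact lmul_e_mem _ (lmul_e_mem _ hb)
    · rw [mul_assoc]; exact lmul_e_mem _ (lmul_e_mem _ hb)
    · rw [mul_assoc, mul_assoc]; exact lmul_e_mem _ (lmul_e_mem _ (lmul_e_mem _ hb))
  | zero => simp
  | add x y _ _ hx hy => rw [add_mul]; exact add_mem hx hy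
  | smul c x _ hx => rw [smul_mul_assoc]; exact Submodule.smul_mem _ _ hx

lemma ι_expand (m : Fin 3 → ℝ) : ι Q03 m = m 0 • e 0 + m 1 • e 1 + m 2 • e 2 := by
  simp only [e, ← map_smul, ← map_add]
  congr 1
  funext j
  fin_cases j <;> simp [Pi.single_apply]

lemma mem_S8 (x : Cl03) : x ∈ S8 := by
  induction x using CliffordAlgebra.induction with
  | algebraMap r =>
    rw [Algebra.algebraMap_eq_smul_one]
    exact Submodule.smul_mem _ _ w1
  | ι m =>
    rw [ι_expand]
    exact add_mem (add_mem (Submodule.smul_mem _ _ w2) (Submodule.smul_mem _ _ w3))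
      (Submodule.smul_mem _ _ w4)
  | mul a b ha hb => exact mul_mem_S8 ha hb
  | add a b ha hb => exact add_mem ha hb

instance : Module.Finite ℝ Cl03 := by
  refine ⟨?_⟩
  have hS : S8 = ⊤ := top_unique fun x _ => mem_S8 x
  rw [← hS]
  exact Submodule.fg_span (by unfold Sgen; exact Set.toFinite _)

instance : IsModuleTopology ℝ Cl03 := ⟨rfl⟩

instance : ContinuousAdd Cl03 := IsModuleTopology.toContinuousAdd ℝ Cl03

instance : IsTopologicalAddGroup Cl03 where
  continuous_neg := IsModuleTopology.continuous_neg ℝ Cl03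

instance : T2Space Cl03 :=
  T2Space.of_injective_continuous (Module.finBasis ℝ Cl03).equivFun.injective
    (IsModuleTopology.continuous_of_linearMap (Module.finBasis ℝ Cl03).equivFun.toLinearMap)

lemma I3_sq : I3 * I3 = 1 := by
  simp only [I3, mul_assoc, es, es', sw10, sw20, sw21, sw10', sw20', sw21',
    neg_mul, mul_neg, neg_neg, one_mul, mul_one]

def Pp : Cl03 := (1/2 : ℝ) • (1 + I3)
def Pm : Cl03 := (1/2 : ℝ) • (1 - I3)

lemma Pp_add_Pm : Pp + Pm = 1 := by
  rw [Pp, Pm, ← smul_add]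
  rw [show (1 + I3) + (1 - I3) = (2:ℝ) • (1:Cl03) by
    simp only [two_smul, smul_eq_mul]; abel]
  rw [smul_smul]; norm_num

lemma Pp_mul_Pp : Pp * Pp = Pp := by
  rw [Pp, smul_mul_smul_comm]
  rw [show (1 + I3) * (1 + I3) = (2:ℝ) • (1 + I3) by
    simp only [mul_add, add_mul, one_mul, mul_one, I3_sq, two_smul, smul_add]; abel]
  rw [smul_smul]; norm_num

lemma Pm_mul_Pm : Pm * Pm = Pm := by
  rw [Pm, smul_mul_smul_comm]
  rw [show (1 - I3) * (1 - I3) = (2:ℝ) • (1 - I3) by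
    simp only [mul_sub, sub_mul, one_mul, mul_one, I3_sq, two_smul, smul_sub]; abel]
  rw [smul_smul]; norm_num

lemma Pp_mul_Pm : Pp * Pm = 0 := by
  rw [Pp, Pm, smul_mul_smul_comm]
  rw [show (1 + I3) * (1 - I3) = (0:Cl03) by
    simp only [mul_sub, add_mul, sub_mul, one_mul, mul_one, I3_sq]; abel]
  rw [smul_zero]

lemma Pm_mul_Pp : Pm * Pp = 0 := by
  rw [Pp, Pm, smul_mul_smul_comm]
  rw [show (1 - I3) * (1 + I3) = (0:Cl03) by
    simp only [mul_add, sub_mul, one_mul, mul_one, I3_sq]; abel]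
  rw [smul_zero]

section Fsec

variable (u : Cl03) (hu : u * u = -1)

def phiu : ℂ →ₐ[ℝ] Cl03 := Complex.liftAux u hu

lemma phiu_apply (z : ℂ) : phiu u hu z = algebraMap ℝ Cl03 z.re + z.im • u :=
  Complex.liftAux_apply u hu z

lemma u_comm_Pp (hcu : u * I3 = I3 * u) : u * Pp = Pp * u := by
  rw [Pp, mul_smul_comm, smul_mul_assoc, mul_add, add_mul, mul_one, one_mul, hcu]

lemma u_comm_Pm (hcu : u * I3 = I3 * u) : u * Pm = Pm * u := by
  rw [Pm, mul_smul_comm, smul_mul_assoc, mul_sub, sub_mul, mul_one, one_mul, hcu]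

lemma phiu_comm_Pp (hcu : u * I3 = I3 * u) (z : ℂ) : phiu u hu z * Pp = Pp * phiu u hu z := by
  rw [phiu_apply, add_mul, mul_add, smul_mul_assoc, mul_smul_comm, u_comm_Pp u hcu,
    ← Algebra.commutes]

lemma phiu_comm_Pm (hcu : u * I3 = I3 * u) (z : ℂ) : phiu u hu z * Pm = Pm * phiu u hu z := by
  rw [phiu_apply, add_mul, mul_add, smul_mul_assoc, mul_smul_comm, u_comm_Pm u hcu,
    ← Algebra.commutes]

/-- The basic map `(z,w) ↦ φ(z)P₊ + φ(w)P₋` as a linear map. -/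
def Fl : (ℂ × ℂ) →ₗ[ℝ] Cl03 :=
  ((LinearMap.mulRight ℝ Pp).comp ((phiu u hu).toLinearMap.comp (LinearMap.fst ℝ ℂ ℂ))) +
  ((LinearMap.mulRight ℝ Pm).comp ((phiu u hu).toLinearMap.comp (LinearMap.snd ℝ ℂ ℂ)))

lemma Fl_apply (z w : ℂ) : Fl u hu (z, w) = phiu u hu z * Pp + phiu u hu w * Pm := rfl

lemma Fl_one : Fl u hu 1 = 1 := by
  rw [show (1 : ℂ × ℂ) = ((1 : ℂ), (1 : ℂ)) from rfl, Fl_apply, map_one, one_mul,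
    one_mul, Pp_add_Pm]

lemma Fl_mul (hcu : u * I3 = I3 * u) (p q : ℂ × ℂ) : Fl u hu (p * q) = Fl u hu p * Fl u hu q := by
  obtain ⟨z, w⟩ := p; obtain ⟨z', w'⟩ := q
  rw [Prod.mk_mul_mk, Fl_apply, Fl_apply, Fl_apply]
  rw [add_mul, mul_add, mul_add]
  rw [show phiu u hu z * Pp * (phiu u hu z' * Pp) = phiu u hu (z * z') * Pp by
    rw [mul_assoc, ← mul_assoc Pp, ← phiu_comm_Pp u hu hcu, mul_assoc, Pp_mul_Pp,
      ← mul_assoc, ← map_mul]]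
  rw [show phiu u hu z * Pp * (phiu u hu w' * Pm) = 0 by
    rw [mul_assoc, ← mul_assoc Pp, ← phiu_comm_Pp u hu hcu, mul_assoc, Pp_mul_Pm, mul_zero,
      mul_zero]]
  rw [show phiu u hu w * Pm * (phiu u hu z' * Pp) = 0 by
    rw [mul_assoc, ← mul_assoc Pm, ← phiu_comm_Pm u hu hcu, mul_assoc, Pm_mul_Pp, mul_zero,
      mul_zero]]
  rw [show phiu u hu w * Pm * (phiu u hu w' * Pm) = phiu u hu (w * w') * Pm by
    rw [mul_assoc, ← mul_assoc Pm, ← phiu_comm_Pm u hu hcu, mul_assoc, Pm_mul_Pm,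
      ← mul_assoc, ← map_mul]]
  rw [add_zero, zero_add]

lemma Fl_pow (hcu : u * I3 = I3 * u) (p : ℂ × ℂ) (k : ℕ) : Fl u hu (p ^ k) = Fl u hu p ^ k := by
  induction k with
  | zero => simpa using Fl_one u hu
  | succ k ih => rw [pow_succ, pow_succ, Fl_mul u hu hcu, ih]

end Fsec

lemma expCl_Fl (u : Cl03) (hu : u * u = -1) (hcu : u * I3 = I3 * u) (z w : ℂ) :
    expCl (Fl u hu (z, w)) = Fl u hu (Complex.exp z, Complex.exp w) := by
  have hz : HasSum (fun k : ℕ => ((k.factorial : ℝ))⁻¹ • z ^ k) (Complex.exp z) := by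
    have h := NormedSpace.exp_series_hasSum_exp' (𝕂 := ℝ) z
    rwa [← congrFun Complex.exp_eq_exp_ℂ z] at h
  have hw : HasSum (fun k : ℕ => ((k.factorial : ℝ))⁻¹ • w ^ k) (Complex.exp w) := by
    have h := NormedSpace.exp_series_hasSum_exp' (𝕂 := ℝ) w
    rwa [← congrFun Complex.exp_eq_exp_ℂ w] at h
  have hzw : HasSum (fun k : ℕ => ((k.factorial : ℝ))⁻¹ • ((z, w) : ℂ × ℂ) ^ k)
      (Complex.exp z, Complex.exp w) := by
    have := HasSum.prodMk hz hw
    convert this using 2 with k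
    rw [Prod.pow_mk, Prod.smul_mk]
  have hcont : Continuous (Fl u hu) := (Fl u hu).continuous_of_finiteDimensional
  have hmap := hzw.mapL ⟨Fl u hu, hcont⟩
  have heq : (fun k : ℕ => (⟨Fl u hu, hcont⟩ : (ℂ × ℂ) →L[ℝ] Cl03)
      (((k.factorial : ℝ))⁻¹ • ((z, w) : ℂ × ℂ) ^ k)) =
      fun k : ℕ => ((k.factorial : ℝ))⁻¹ • (Fl u hu (z, w)) ^ k := by
    funext k
    simp only [ContinuousLinearMap.coe_mk', map_smul, Fl_pow u hu hcu]
  rw [heq] at hmap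
  exact hmap.tsum_eq

/-- exponential of the logarithm of a nonzero vector in Cl(0,3). -/
theorem exp_log_vector_Cl03
    (a1 a2 a3 n : ℝ) (c1 c2 : ℤ) (va : Cl03)
    (hva : va = a1 • e 0 + a2 • e 1 + a3 • e 2)
    (hn : n = Real.sqrt (a1 ^ 2 + a2 ^ 2 + a3 ^ 2))
    (hnpos : 0 < n) :
    expCl (algebraMap ℝ Cl03 ((1 / 2) * Real.log (n ^ 2)) +
      (π / n) • (va * (algebraMap ℝ Cl03 (1 / 2) + (c1 : ℝ) • (1 + I3) +
        (c2 : ℝ) • (1 - I3)))) = va := by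
  have hn0 : n ≠ 0 := ne_of_gt hnpos
  have hsq : n ^ 2 = a1 ^ 2 + a2 ^ 2 + a3 ^ 2 := by
    rw [hn]; exact Real.sq_sqrt (by positivity)
  have hkey : va * va = (-(a1 ^ 2 + a2 ^ 2 + a3 ^ 2)) • (1 : Cl03) := by
    rw [hva]
    simp only [add_mul, mul_add, smul_mul_assoc, mul_smul_comm, es, sw10, sw20, sw21]
    module
  set u : Cl03 := n⁻¹ • va with hu_def
  have hu : u * u = -1 := by
    rw [hu_def, smul_mul_assoc, mul_smul_comm, hkey, smul_smul, smul_smul, ← hsq]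
    rw [show n⁻¹ * n⁻¹ * -n ^ 2 = -1 by field_simp, neg_smul, one_smul]
  have hvaI : va * I3 = I3 * va := by
    rw [hva]
    simp only [add_mul, mul_add, smul_mul_assoc, mul_smul_comm, e_comm_I3]
  have hcu : u * I3 = I3 * u := by
    rw [hu_def, smul_mul_assoc, mul_smul_comm, hvaI]
  set z : ℂ := (Real.log n : ℂ) + (↑(π * (1/2 + 2*(c1:ℝ)))) * Complex.I with hz_def
  set w : ℂ := (Real.log n : ℂ) + (↑(π * (1/2 + 2*(c2:ℝ)))) * Complex.I with hw_def
  have harg : algebraMap ℝ Cl03 ((1 / 2) * Real.log (n ^ 2)) +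
      (π / n) • (va * (algebraMap ℝ Cl03 (1 / 2) + (c1 : ℝ) • (1 + I3) +
        (c2 : ℝ) • (1 - I3))) = Fl u hu (z, w) := by
    rw [Real.log_pow, Fl_apply, phiu_apply, phiu_apply]
    simp only [hz_def, hw_def, Complex.add_re, Complex.add_im, Complex.ofReal_re,
      Complex.ofReal_im, Complex.mul_re, Complex.mul_im, Complex.I_re, Complex.I_im,
      mul_zero, mul_one, zero_mul, sub_zero, zero_add, add_zero]
    simp only [Pp, Pm, Algebra.algebraMap_eq_smul_one, hu_def, mul_add, add_mul,
      mul_sub, sub_mul, smul_add, smul_sub, smul_smul, mul_smul_comm, smul_mul_assoc,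
      mul_one, one_mul]
    match_scalars <;> field_simp <;> ring
  have hcos1 : Real.cos (π * (1/2 + 2*(c1:ℝ))) = 0 := by
    rw [show π * (1/2 + 2*(c1:ℝ)) = π/2 + (c1:ℝ) * (2 * π) by ring,
      Real.cos_add_int_mul_two_pi, Real.cos_pi_div_two]
  have hsin1 : Real.sin (π * (1/2 + 2*(c1:ℝ))) = 1 := by
    rw [show π * (1/2 + 2*(c1:ℝ)) = π/2 + (c1:ℝ) * (2 * π) by ring,
      Real.sin_add_int_mul_two_pi, Real.sin_pi_div_two]
  have hcos2 : Real.cos (π * (1/2 + 2*(c2:ℝ))) = 0 := by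
    rw [show π * (1/2 + 2*(c2:ℝ)) = π/2 + (c2:ℝ) * (2 * π) by ring,
      Real.cos_add_int_mul_two_pi, Real.cos_pi_div_two]
  have hsin2 : Real.sin (π * (1/2 + 2*(c2:ℝ))) = 1 := by
    rw [show π * (1/2 + 2*(c2:ℝ)) = π/2 + (c2:ℝ) * (2 * π) by ring,
      Real.sin_add_int_mul_two_pi, Real.sin_pi_div_two]
  have hez : Complex.exp z = (n : ℂ) * Complex.I := by
    rw [hz_def, Complex.exp_add, ← Complex.ofReal_exp, Real.exp_log hnpos,
      Complex.exp_mul_I, ← Complex.ofReal_cos, ← Complex.ofReal_sin, hcos1, hsin1]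
    simp
  have hew : Complex.exp w = (n : ℂ) * Complex.I := by
    rw [hw_def, Complex.exp_add, ← Complex.ofReal_exp, Real.exp_log hnpos,
      Complex.exp_mul_I, ← Complex.ofReal_cos, ← Complex.ofReal_sin, hcos2, hsin2]
    simp
  have hexp : Fl u hu (Complex.exp z, Complex.exp w) = va := by
    rw [hez, hew, Fl_apply, ← mul_add, Pp_add_Pm, mul_one, phiu_apply]
    simp only [Complex.mul_re, Complex.mul_im, Complex.I_re, Complex.I_im,
      Complex.ofReal_re, Complex.ofReal_im, mul_zero, mul_one, zero_mul, sub_zero,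
      zero_add, add_zero, map_zero, zero_sub, mul_zero]
    rw [hu_def, smul_smul, mul_inv_cancel₀ hn0, one_smul]
  rw [harg, expCl_Fl u hu hcu z w, hexp]
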